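/- The sequence (b_n)_{n≥1} is dense in the interval [m, M], where m = inf{b_n : n ≥ 1} and M = sup{b_n : n ≥ 1}; equivalently, every γ ∈ [m, M] is an accumulation point of (b_n). -/

import Mathlib

open Real Filter Set MeasureTheory Topology
open scoped Classical ENNReal

/-- The Cantor-integer function: apply the digit map `h` to the `s`-ary digits of `n`
and read the result in base `p`. -/
def cantorInt (p s : ℕ) (h : ℕ → ℕ) (n : ℕ) : ℕ :=
  (Nat.digits s n).foldr (fun d acc => h d + p * acc) 0

/-- `b n = a n / n ^ (log_s p)`. -/
noncomputable def cantorB (p s : ℕ) (h : ℕ → ℕ) (n : ℕ) : ℝ :=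
  (cantorInt p s h n : ℝ) / (n : ℝ) ^ Real.logb s p

/-- `a(x) = a_⌊x⌋`. -/
noncomputable def cantorA (p s : ℕ) (h : ℕ → ℕ) (x : ℝ) : ℝ :=
  (cantorInt p s h ⌊x⌋₊ : ℝ)

/-!
Write `L = log_s p`, and for `n ≥ 1` let `I n ≤ S n` be the infimum and supremum of `b` over the
descendants of `n` in the `s`-ary tree. Since `a (s^j n + r)` lies between `p^j a n` and
`p^j (a n + 1)`, the values of `b` on the descendants of `n` lie in
`[a n / (n + 1)^L, (a n + 1) / n^L]`, an interval whose length tends to `0`. The intervals of the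
`s` children of `n` are linked cyclically, `I c ≤ S (c + 1)` for consecutive children and
`I (last) ≤ S (first)`, and together they reach down to `I n` and up to `S n`; hence every
`γ ∈ [I n, S n]` lies in the interval of some child. The same chain argument on the leading
digits `1, …, s - 1` starts the descent from `[m, M]`, and following it down the tree gives
arbitrarily large `n` with `|b n - γ| ≤ S n - I n → 0`.
-/

theorem Nat.ofDigits_le_ofDigits_map {b : ℕ} {f : ℕ → ℕ} {l : List ℕ}
    (hf : ∀ d ∈ l, d ≤ f d) : Nat.ofDigits b l ≤ Nat.ofDigits b (l.map f) := by
  induction l with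
  | nil => rfl
  | cons d l ih =>
    simp only [List.map_cons, Nat.ofDigits_cons]
    gcongr
    exacts [hf d (by simp), ih fun e he => hf e (by simp [he])]

theorem natCast_rpow_logb {p s : ℕ} (hs : 1 < s) (hp : 0 < p) : (s : ℝ) ^ logb s p = p :=
  Real.rpow_logb (by positivity) (by exact_mod_cast hs.ne') (by exact_mod_cast hp)

theorem natCast_pow_rpow_logb {p s : ℕ} (hs : 1 < s) (hp : 0 < p) (j : ℕ) :
    ((s : ℝ) ^ j) ^ logb s p = (p : ℝ) ^ j := by
  rw [← Real.rpow_pow_comm (by positivity), natCast_rpow_logb hs hp]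

theorem logb_natCast_nonneg {p s : ℕ} (hs : 1 < s) (hp : 0 < p) : 0 ≤ logb s p :=
  Real.logb_nonneg (by exact_mod_cast hs) (by exact_mod_cast hp)

theorem one_le_logb_natCast {p s : ℕ} (hs : 1 < s) (hsp : s ≤ p) : 1 ≤ logb s p := by
  rw [Real.le_logb_iff_rpow_le (by exact_mod_cast hs) (by norm_cast; omega), Real.rpow_one]
  exact_mod_cast hsp

theorem add_one_div_add_one_rpow_le {x y L : ℝ} (hx : 0 < x) (hxy : x ≤ y) (hL : 1 ≤ L) :
    (y + 1) / (x + 1) ^ L ≤ y / x ^ L := by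
  have hy : 0 < y := hx.trans_le hxy
  have hstep : y + 1 ≤ y * ((x + 1) / x) := by
    rw [mul_div_assoc', le_div_iff₀ hx]; nlinarith
  rw [div_le_div_iff₀ (by positivity) (by positivity)]
  calc (y + 1) * x ^ L ≤ y * ((x + 1) / x) * x ^ L := by gcongr
    _ ≤ y * ((x + 1) / x) ^ L * x ^ L := by
      gcongr; exact Real.self_le_rpow_of_one_le (by rw [le_div_iff₀ hx]; linarith) hL
    _ = y * (x + 1) ^ L := by
      rw [Real.div_rpow (by positivity) hx.le]; field_simp

theorem tendsto_mul_one_sub_div_add_one_rpow_add_one_div_rpow {L : ℝ} (hL : 0 < L) (c : ℝ) :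
    Tendsto (fun n : ℕ => c * (1 - ((n : ℝ) / (n + 1)) ^ L) + 1 / (n : ℝ) ^ L) atTop
      (𝓝 0) := by
  have hratio : Tendsto (fun n : ℕ => ((n : ℝ) / (n + 1)) ^ L) atTop (𝓝 1) := by
    simpa using (tendsto_natCast_div_add_atTop (1 : ℝ)).rpow_const (Or.inr hL.le)
  have hinv : Tendsto (fun n : ℕ => 1 / (n : ℝ) ^ L) atTop (𝓝 0) := by
    simp only [one_div]
    exact ((tendsto_rpow_atTop hL).comp tendsto_natCast_atTop_atTop).inv_tendsto_atTop
  simpa using (hratio.const_sub 1 |>.const_mul c).add hinv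

theorem exists_mem_Icc_of_chain {I S : ℕ → ℝ} {a b : ℕ} {γ : ℝ}
    (hchain : ∀ i, a ≤ i → i + 1 < b → I i ≤ S (i + 1)) (hwrap : I (b - 1) ≤ S a)
    (hI : ∃ i ∈ Ico a b, I i ≤ γ) (hS : ∃ j ∈ Ico a b, γ ≤ S j) :
    ∃ k ∈ Ico a b, γ ∈ Icc (I k) (S k) := by
  by_contra! hnone
  have hpropagate :
      ∀ k ∈ Ico a b, γ ≤ S k → ∀ k', k ≤ k' → k' < b → γ < I k' := by
    intro k hk hSk k' hkk' hk'
    induction k', hkk' using Nat.le_induction with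
    | base => exact lt_of_not_ge fun hIk => hnone k hk ⟨hIk, hSk⟩
    | succ k' hkk' ih =>
      have hS' : γ ≤ S (k' + 1) := (ih (by omega)).le.trans (hchain k' (by grind) hk')
      exact lt_of_not_ge fun hIk => hnone _ ⟨by grind, hk'⟩ ⟨hIk, hS'⟩
  obtain ⟨i, hi, hIi⟩ := hI
  obtain ⟨j, hj, hSj⟩ := hS
  have hSa : γ ≤ S a := (hpropagate j hj hSj (b - 1) (by grind) (by grind)).le.trans hwrap
  exact (hpropagate a ⟨le_rfl, by grind⟩ hSa i hi.1 hi.2).not_ge hIi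

theorem Nat.frequently_atTop_of_exists_of_forall_exists_gt {P : ℕ → Prop} (h₀ : ∃ n, P n)
    (hstep : ∀ n, P n → ∃ m > n, P m) : ∃ᶠ n in atTop, P n := by
  rw [frequently_atTop]
  intro N
  induction N with
  | zero => obtain ⟨n, hn⟩ := h₀; exact ⟨n, n.zero_le, hn⟩
  | succ N ih =>
    obtain ⟨n, hNn, hn⟩ := ih
    obtain ⟨m, hnm, hm⟩ := hstep n hn
    exact ⟨m, by omega, hm⟩

theorem mapClusterPt_of_frequently_dist_le {α X : Type*} [PseudoMetricSpace X] {l : Filter α}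
    {f : α → X} {w : α → ℝ} {x : X} (hw : Tendsto w l (𝓝 0))
    (hfreq : ∃ᶠ a in l, dist (f a) x ≤ w a) : MapClusterPt x l f := by
  rw [mapClusterPt_iff_frequently]
  intro U hU
  obtain ⟨ε, hε, hball⟩ := Metric.mem_nhds_iff.1 hU
  exact (hfreq.and_eventually (hw.eventually (gt_mem_nhds hε))).mono
    fun a ⟨hle, hlt⟩ => hball (hle.trans_lt hlt)

theorem cantorInt_eq_ofDigits (p s : ℕ) (h : ℕ → ℕ) (n : ℕ) :
    cantorInt p s h n = Nat.ofDigits p ((Nat.digits s n).map h) := by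
  simp [cantorInt, Nat.ofDigits_eq_foldr, List.foldr_map]

/-- The numbers whose base-`s` expansion begins with that of `n`. -/
def descendants (s n : ℕ) : Set ℕ := {m | ∃ j, ∃ r < s ^ j, m = s ^ j * n + r}

theorem self_mem_descendants (s n : ℕ) : n ∈ descendants s n :=
  ⟨0, 0, by simp, by simp⟩

section Descendants

variable {s : ℕ}

theorem pow_mul_add_pred_mem_descendants (hs : 0 < s) (n j : ℕ) :
    s ^ j * n + (s ^ j - 1) ∈ descendants s n :=
  ⟨j, s ^ j - 1, by have := pow_pos hs j; omega, rfl⟩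

theorem eq_or_mem_descendants_child (hs : 0 < s) {n m : ℕ} (hm : m ∈ descendants s n) :
    m = n ∨ ∃ d < s, m ∈ descendants s (s * n + d) := by
  obtain ⟨_ | j, r, hr, rfl⟩ := hm
  · left; simp_all
  · right
    have hsj : 0 < s ^ j := pow_pos hs j
    refine ⟨r / s ^ j, (Nat.div_lt_iff_lt_mul hsj).2 (by rwa [← pow_succ']),
      j, r % s ^ j, Nat.mod_lt _ hsj, ?_⟩
    have := Nat.div_add_mod r (s ^ j)
    rw [pow_succ]
    nlinarith

theorem exists_digit_mem_descendants (hs : 1 < s) {n : ℕ} (hn : 0 < n) :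
    ∃ d, 0 < d ∧ d < s ∧ n ∈ descendants s d := by
  set K := Nat.log s n
  have hK : s ^ K ≤ n := Nat.pow_log_le_self s hn.ne'
  have hsK : 0 < s ^ K := pow_pos (by omega) K
  refine ⟨n / s ^ K, Nat.div_pos hK hsK, ?_, K, n % s ^ K, Nat.mod_lt _ hsK,
    (Nat.div_add_mod n (s ^ K)).symm⟩
  rw [Nat.div_lt_iff_lt_mul hsK, ← pow_succ']
  exact Nat.lt_pow_succ_log_self hs n

end Descendants

noncomputable def cantorBInf (p s : ℕ) (h : ℕ → ℕ) (n : ℕ) : ℝ :=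
  sInf (cantorB p s h '' descendants s n)

noncomputable def cantorBSup (p s : ℕ) (h : ℕ → ℕ) (n : ℕ) : ℝ :=
  sSup (cantorB p s h '' descendants s n)

section CantorSequence

variable {p s : ℕ} {h : ℕ → ℕ}

@[simp]
theorem cantorInt_zero : cantorInt p s h 0 = 0 := by
  simp [cantorInt]

theorem cantorInt_mul_add (hs : 1 < s) {q d : ℕ} (hd : d < s) (hpos : 0 < s * q + d) :
    cantorInt p s h (s * q + d) = h d + p * cantorInt p s h q := by
  rw [cantorInt_eq_ofDigits, cantorInt_eq_ofDigits, add_comm, Nat.digits_add s hs d q hd ?_]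
  · rfl
  · by_contra! h0
    simp [h0] at hpos

theorem cantorInt_of_lt (hs : 1 < s) {d : ℕ} (hd : 0 < d) (hds : d < s) :
    cantorInt p s h d = h d := by
  simpa using cantorInt_mul_add (p := p) (h := h) (q := 0) hs hds (by omega)

theorem self_le_cantorInt (hs : 1 < s) (hsp : s ≤ p) (hh : ∀ d < s, d ≤ h d) (n : ℕ) :
    n ≤ cantorInt p s h n :=
  calc n = Nat.ofDigits s (Nat.digits s n) := (Nat.ofDigits_digits s n).symm
    _ ≤ Nat.ofDigits p (Nat.digits s n) := Nat.ofDigits_monotone _ hsp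
    _ ≤ Nat.ofDigits p ((Nat.digits s n).map h) :=
      Nat.ofDigits_le_ofDigits_map fun d hd => hh d (Nat.digits_lt_base hs hd)
    _ = cantorInt p s h n := (cantorInt_eq_ofDigits p s h n).symm

theorem cantorInt_pow_mul_add_bounds (hs : 1 < s) (hp : 1 < p) (hh : ∀ d < s, h d < p)
    {n j r : ℕ} (hn : 0 < n) (hr : r < s ^ j) :
    p ^ j * cantorInt p s h n ≤ cantorInt p s h (s ^ j * n + r) ∧
      cantorInt p s h (s ^ j * n + r) < p ^ j * (cantorInt p s h n + 1) := by
  set pre := Nat.digits s r ++ List.replicate (j - (Nat.digits s r).length) 0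
  have hlen : (Nat.digits s r).length ≤ j := (Nat.digits_length_le_iff hs r).2 hr
  have hpre_len : (pre.map h).length = j := by simp [pre]; omega
  have hdigits : Nat.digits s (s ^ j * n + r) = pre ++ Nat.digits s n := by
    rw [Nat.digits_append_zeroes_append_digits hs hn, add_comm, Nat.add_sub_cancel' hlen]
  have hsplit : cantorInt p s h (s ^ j * n + r) =
      Nat.ofDigits p (pre.map h) + p ^ j * cantorInt p s h n := by
    rw [cantorInt_eq_ofDigits, cantorInt_eq_ofDigits, hdigits, List.map_append,
      Nat.ofDigits_append, hpre_len]
  have hpre : Nat.ofDigits p (pre.map h) < p ^ j := by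
    refine hpre_len ▸ Nat.ofDigits_lt_base_pow_length hp fun x hx => ?_
    obtain ⟨d, hd, rfl⟩ := List.mem_map.1 hx
    refine hh d ?_
    rcases List.mem_append.1 hd with hd | hd
    · exact Nat.digits_lt_base hs hd
    · rw [List.eq_of_mem_replicate hd]; omega
  rw [hsplit, mul_add_one]
  constructor <;> omega

theorem cantorB_nonneg (n : ℕ) : 0 ≤ cantorB p s h n := by
  unfold cantorB; positivity

theorem cantorB_pow_mul_add_mem_Icc (hs : 1 < s) (hp : 1 < p) (hh : ∀ d < s, h d < p)
    {n j r : ℕ} (hn : 0 < n) (hr : r < s ^ j) :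
    cantorB p s h (s ^ j * n + r) ∈
      Icc (cantorInt p s h n / ((n : ℝ) + r / s ^ j) ^ logb s p)
        ((cantorInt p s h n + 1) / ((n : ℝ) + r / s ^ j) ^ logb s p) := by
  set t : ℝ := n + r / s ^ j
  have ht : 0 < t := by positivity
  have hx : ((s ^ j * n + r : ℕ) : ℝ) ^ logb s p = p ^ j * t ^ logb s p := by
    rw [show ((s ^ j * n + r : ℕ) : ℝ) = s ^ j * t by push_cast [t]; field_simp,
      Real.mul_rpow (by positivity) ht.le, natCast_pow_rpow_logb hs (by omega)]
  obtain ⟨hlow, hhigh⟩ := cantorInt_pow_mul_add_bounds hs hp hh hn hr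
  have hpj : (0 : ℝ) < p ^ j := by positivity
  rw [cantorB, hx, ← div_div]
  constructor
  · gcongr
    rw [le_div_iff₀' hpj]; exact_mod_cast hlow
  · gcongr
    rw [div_le_iff₀' hpj]; exact_mod_cast hhigh.le

theorem cantorB_le_of_mem_descendants (hs : 1 < s) (hp : 1 < p) (hh : ∀ d < s, h d < p)
    {n m : ℕ} (hn : 0 < n) (hm : m ∈ descendants s n) :
    cantorB p s h m ≤ (cantorInt p s h n + 1) / (n : ℝ) ^ logb s p := by
  obtain ⟨j, r, hr, rfl⟩ := hm
  refine (cantorB_pow_mul_add_mem_Icc hs hp hh hn hr).2.trans ?_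
  have : 0 ≤ logb s p := logb_natCast_nonneg hs (by omega)
  gcongr
  exact le_add_of_nonneg_right (by positivity)

theorem div_rpow_le_cantorB_of_mem_descendants (hs : 1 < s) (hp : 1 < p)
    (hh : ∀ d < s, h d < p) {n m : ℕ} (hn : 0 < n) (hm : m ∈ descendants s n) :
    cantorInt p s h n / ((n : ℝ) + 1) ^ logb s p ≤ cantorB p s h m := by
  obtain ⟨j, r, hr, rfl⟩ := hm
  refine le_trans ?_ (cantorB_pow_mul_add_mem_Icc hs hp hh hn hr).1
  have : 0 ≤ logb s p := logb_natCast_nonneg hs (by omega)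
  gcongr
  rw [div_le_one (by positivity)]
  exact_mod_cast hr.le

theorem cantorB_le_of_pos (hs : 1 < s) (hp : 1 < p) (hh : ∀ d < s, h d < p) {n : ℕ}
    (hn : 0 < n) : cantorB p s h n ≤ p := by
  obtain ⟨d, hd, hds, hmem⟩ := exists_digit_mem_descendants hs hn
  have hhd : (h d : ℝ) + 1 ≤ p := by exact_mod_cast hh d hds
  have hdL : 1 ≤ (d : ℝ) ^ logb s p :=
    Real.one_le_rpow (by exact_mod_cast hd) (logb_natCast_nonneg hs (by omega))
  calc cantorB p s h n ≤ (cantorInt p s h d + 1) / (d : ℝ) ^ logb s p :=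
        cantorB_le_of_mem_descendants hs hp hh hd hmem
    _ ≤ p / 1 := by rw [cantorInt_of_lt hs hd hds]; gcongr
    _ = p := div_one _

theorem bddBelow_image_cantorB (S : Set ℕ) : BddBelow (cantorB p s h '' S) :=
  ⟨0, by rintro _ ⟨m, -, rfl⟩; exact cantorB_nonneg m⟩

theorem bddAbove_image_cantorB_descendants (hs : 1 < s) (hp : 1 < p)
    (hh : ∀ d < s, h d < p) {n : ℕ} (hn : 0 < n) :
    BddAbove (cantorB p s h '' descendants s n) :=
  ⟨_, by rintro _ ⟨m, hm, rfl⟩; exact cantorB_le_of_mem_descendants hs hp hh hn hm⟩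

theorem cantorBInf_le_cantorB {n m : ℕ} (hm : m ∈ descendants s n) :
    cantorBInf p s h n ≤ cantorB p s h m :=
  csInf_le (bddBelow_image_cantorB _) (mem_image_of_mem _ hm)

theorem cantorB_le_cantorBSup (hs : 1 < s) (hp : 1 < p) (hh : ∀ d < s, h d < p) {n m : ℕ}
    (hn : 0 < n) (hm : m ∈ descendants s n) :
    cantorB p s h m ≤ cantorBSup p s h n :=
  le_csSup (bddAbove_image_cantorB_descendants hs hp hh hn) (mem_image_of_mem _ hm)

theorem cantorBInf_le (hs : 1 < s) (hp : 1 < p) (hh : ∀ d < s, h d < p) {n : ℕ} (hn : 0 < n) :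
    cantorBInf p s h n ≤ (cantorInt p s h n + 1) / ((n : ℝ) + 1) ^ logb s p := by
  have hfrac : Tendsto (fun j : ℕ => (n : ℝ) + ((s ^ j - 1 : ℕ) : ℝ) / (s : ℝ) ^ j) atTop
      (𝓝 ((n : ℝ) + 1)) := by
    have hsj (j : ℕ) : ((s ^ j - 1 : ℕ) : ℝ) / (s : ℝ) ^ j = 1 - ((s : ℝ)⁻¹) ^ j := by
      rw [Nat.cast_sub (Nat.one_le_pow _ _ (by omega)), sub_div, Nat.cast_pow, Nat.cast_one,
        div_self (by positivity), inv_pow, one_div]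
    simp_rw [hsj]
    simpa using (tendsto_pow_atTop_nhds_zero_of_lt_one (by positivity)
      (inv_lt_one_of_one_lt₀ (by exact_mod_cast hs))).const_sub 1 |>.const_add (n : ℝ)
  have hlim : Tendsto (fun j : ℕ => ((cantorInt p s h n : ℝ) + 1) /
      ((n : ℝ) + ((s ^ j - 1 : ℕ) : ℝ) / (s : ℝ) ^ j) ^ logb s p) atTop
      (𝓝 (((cantorInt p s h n : ℝ) + 1) / ((n : ℝ) + 1) ^ logb s p)) :=
    tendsto_const_nhds.div (hfrac.rpow_const (Or.inl (by positivity))) (by positivity)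
  refine ge_of_tendsto hlim (Eventually.of_forall fun j => ?_)
  exact (cantorBInf_le_cantorB (pow_mul_add_pred_mem_descendants (by omega) n j)).trans
    (cantorB_pow_mul_add_mem_Icc hs hp hh hn (Nat.sub_lt (by positivity) one_pos)).2

theorem cantorBSup_sub_cantorBInf_le (hs : 1 < s) (hp : 1 < p) (hh : ∀ d < s, h d < p)
    {n : ℕ} (hn : 0 < n) :
    cantorBSup p s h n - cantorBInf p s h n ≤
      p * (1 - ((n : ℝ) / (n + 1)) ^ logb s p) + 1 / (n : ℝ) ^ logb s p := by
  have hL : 0 ≤ logb s p := logb_natCast_nonneg hs (by omega)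
  have hne : (cantorB p s h '' descendants s n).Nonempty :=
    ⟨_, mem_image_of_mem _ (self_mem_descendants s n)⟩
  have hsup : cantorBSup p s h n ≤ (cantorInt p s h n + 1) / (n : ℝ) ^ logb s p :=
    csSup_le hne (forall_mem_image.2 fun m hm => cantorB_le_of_mem_descendants hs hp hh hn hm)
  have hinf : cantorInt p s h n / ((n : ℝ) + 1) ^ logb s p ≤ cantorBInf p s h n :=
    le_csInf hne (forall_mem_image.2 fun m hm =>
      div_rpow_le_cantorB_of_mem_descendants hs hp hh hn hm)
  have hdecomp : (cantorInt p s h n + 1) / (n : ℝ) ^ logb s p -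
      cantorInt p s h n / ((n : ℝ) + 1) ^ logb s p =
      cantorB p s h n * (1 - ((n : ℝ) / (n + 1)) ^ logb s p) + 1 / (n : ℝ) ^ logb s p := by
    have : (0 : ℝ) < n := by exact_mod_cast hn
    rw [cantorB, Real.div_rpow this.le (by positivity)]
    field_simp
    ring
  have hratio : ((n : ℝ) / (n + 1)) ^ logb s p ≤ 1 :=
    Real.rpow_le_one (by positivity) (div_le_one_of_le₀ (by linarith) (by positivity)) hL
  have := mul_le_mul_of_nonneg_right (cantorB_le_of_pos hs hp hh hn) (sub_nonneg.2 hratio)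
  linarith

theorem cantorBInf_le_cantorBSup_succ (hs : 1 < s) (hp : 1 < p) (hh : ∀ d < s, h d < p)
    {q d : ℕ} (hpos : 0 < s * q + d) (hd : d + 1 < s) (hinc : h d < h (d + 1)) :
    cantorBInf p s h (s * q + d) ≤ cantorBSup p s h (s * q + d + 1) := by
  have hsucc : cantorInt p s h (s * q + d) + 1 ≤ cantorInt p s h (s * q + d + 1) := by
    rw [cantorInt_mul_add hs (by omega) hpos, show s * q + d + 1 = s * q + (d + 1) from rfl,
      cantorInt_mul_add hs hd (by omega)]
    omega
  calc cantorBInf p s h (s * q + d)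
      ≤ (cantorInt p s h (s * q + d) + 1) / ((s * q + d : ℕ) + 1 : ℝ) ^ logb s p :=
        cantorBInf_le hs hp hh hpos
    _ ≤ cantorInt p s h (s * q + d + 1) / ((s * q + d : ℕ) + 1 : ℝ) ^ logb s p := by
        gcongr; exact_mod_cast hsucc
    _ = cantorB p s h (s * q + d + 1) := by rw [cantorB]; push_cast; rfl
    _ ≤ cantorBSup p s h (s * q + d + 1) :=
        cantorB_le_cantorBSup hs hp hh (by omega) (self_mem_descendants s _)

theorem cantorBInf_mul_add_pred_le (hs : 1 < s) (hp : 1 < p) (hh : ∀ d < s, h d < p) (q : ℕ) :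
    cantorBInf p s h (s * q + (s - 1)) ≤
      (cantorInt p s h q + 1) / ((q : ℝ) + 1) ^ logb s p := by
  have hnum :
      ((cantorInt p s h (s * q + (s - 1)) + 1 : ℕ) : ℝ) ≤ p * (cantorInt p s h q + 1) := by
    rw [cantorInt_mul_add hs (by omega) (by omega)]
    have := hh (s - 1) (by omega)
    push_cast
    have : (h (s - 1) : ℝ) + 1 ≤ p := by exact_mod_cast this
    nlinarith
  have hden :
      (((s * q + (s - 1) : ℕ) : ℝ) + 1) ^ logb s p = p * ((q : ℝ) + 1) ^ logb s p := by
    rw [show ((s * q + (s - 1) : ℕ) : ℝ) + 1 = s * ((q : ℝ) + 1) by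
      rw [Nat.cast_add, Nat.cast_mul, Nat.cast_sub (by omega)]; push_cast; ring,
      Real.mul_rpow (by positivity) (by positivity), natCast_rpow_logb hs (by omega)]
  calc cantorBInf p s h (s * q + (s - 1))
      ≤ (cantorInt p s h (s * q + (s - 1)) + 1) /
          (((s * q + (s - 1) : ℕ) : ℝ) + 1) ^ logb s p :=
        cantorBInf_le hs hp hh (by omega)
    _ ≤ p * (cantorInt p s h q + 1) / (p * ((q : ℝ) + 1) ^ logb s p) := by
        rw [hden]; gcongr; exact_mod_cast hnum
    _ = (cantorInt p s h q + 1) / ((q : ℝ) + 1) ^ logb s p :=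
        mul_div_mul_left _ _ (by positivity)

theorem cantorBInf_mul_add_pred_le_cantorB (hs : 1 < s) (hsp : s ≤ p) (hh : ∀ d < s, h d < p)
    (hid : ∀ d < s, d ≤ h d) {n : ℕ} (hn : 0 < n) :
    cantorBInf p s h (s * n + (s - 1)) ≤ cantorB p s h n :=
  (cantorBInf_mul_add_pred_le hs (by omega) hh n).trans <|
    add_one_div_add_one_rpow_le (by exact_mod_cast hn)
      (by exact_mod_cast self_le_cantorInt hs hsp hid n) (one_le_logb_natCast hs hsp)

theorem cantorB_le_cantorBSup_mul (hs : 1 < s) (hp : 1 < p) (hh : ∀ d < s, h d < p) {n : ℕ}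
    (hn : 0 < n) : cantorB p s h n ≤ cantorBSup p s h (s * n) := by
  have hnum : (p : ℝ) * cantorInt p s h n ≤ cantorInt p s h (s * n) := by
    have := cantorInt_mul_add (p := p) (h := h) hs (d := 0) (q := n) (by omega) (by positivity)
    rw [add_zero] at this
    rw [this]; push_cast; linarith [(Nat.cast_nonneg (h 0) : (0 : ℝ) ≤ h 0)]
  have hden : ((s * n : ℕ) : ℝ) ^ logb s p = p * (n : ℝ) ^ logb s p := by
    rw [Nat.cast_mul, Real.mul_rpow (by positivity) (by positivity),
      natCast_rpow_logb hs (by omega)]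
  calc cantorB p s h n = p * cantorInt p s h n / (p * (n : ℝ) ^ logb s p) :=
        (mul_div_mul_left _ _ (by positivity)).symm
    _ ≤ cantorB p s h (s * n) := by rw [cantorB, hden]; gcongr
    _ ≤ cantorBSup p s h (s * n) :=
        cantorB_le_cantorBSup hs hp hh (by positivity) (self_mem_descendants s _)

theorem exists_cantorBSup_le_child (hs : 1 < s) (hp : 1 < p) (hh : ∀ d < s, h d < p) {n : ℕ}
    (hn : 0 < n) : ∃ d < s, cantorBSup p s h n ≤ cantorBSup p s h (s * n + d) := by
  obtain ⟨d, hd, hmax⟩ := (Finset.range s).exists_max_image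
    (fun d => cantorBSup p s h (s * n + d)) ⟨0, by simp; omega⟩
  refine ⟨d, Finset.mem_range.1 hd,
    csSup_le ⟨_, mem_image_of_mem _ (self_mem_descendants s n)⟩ ?_⟩
  rintro _ ⟨m, hm, rfl⟩
  rcases eq_or_mem_descendants_child (by omega) hm with rfl | ⟨e, he, hme⟩
  · exact (cantorB_le_cantorBSup_mul hs hp hh hn).trans
      (by simpa using hmax 0 (Finset.mem_range.2 (by omega)))
  · exact (cantorB_le_cantorBSup hs hp hh (by positivity) hme).trans
      (hmax e (Finset.mem_range.2 he))

theorem exists_child_cantorBInf_le (hs : 1 < s) (hsp : s ≤ p) (hh : ∀ d < s, h d < p)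
    (hid : ∀ d < s, d ≤ h d) {n : ℕ} (hn : 0 < n) :
    ∃ d < s, cantorBInf p s h (s * n + d) ≤ cantorBInf p s h n := by
  obtain ⟨d, hd, hmin⟩ := (Finset.range s).exists_min_image
    (fun d => cantorBInf p s h (s * n + d)) ⟨0, by simp; omega⟩
  refine ⟨d, Finset.mem_range.1 hd,
    le_csInf ⟨_, mem_image_of_mem _ (self_mem_descendants s n)⟩ ?_⟩
  rintro _ ⟨m, hm, rfl⟩
  rcases eq_or_mem_descendants_child (by omega) hm with rfl | ⟨e, he, hme⟩
  · exact (hmin (s - 1) (Finset.mem_range.2 (by omega))).trans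
      (cantorBInf_mul_add_pred_le_cantorB hs hsp hh hid hn)
  · exact (hmin e (Finset.mem_range.2 he)).trans (cantorBInf_le_cantorB hme)

theorem exists_gt_mem_Icc_cantorBInf_cantorBSup (hs : 1 < s) (hsp : s < p)
    (hmono : ∀ i j, i < j → j < s → h i < h j) (hh : ∀ d < s, h d < p) {n : ℕ}
    (hn : 0 < n) {γ : ℝ} (hγ : γ ∈ Icc (cantorBInf p s h n) (cantorBSup p s h n)) :
    ∃ m > n, γ ∈ Icc (cantorBInf p s h m) (cantorBSup p s h m) := by
  have hid : ∀ d < s, d ≤ h d := fun d hd =>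
    StrictMonoOn.Iic_id_le (n := s - 1) (fun i _ j hj hij => hmono i j hij (by grind)) d (by omega)
  obtain ⟨d₁, hd₁, hI⟩ := exists_child_cantorBInf_le hs hsp.le hh hid hn
  obtain ⟨d₂, hd₂, hS⟩ := exists_cantorBSup_le_child hs (by omega) hh hn
  obtain ⟨m, hm, hγm⟩ := exists_mem_Icc_of_chain (a := s * n) (b := s * n + s)
    (I := cantorBInf p s h) (S := cantorBSup p s h)
    (fun i hi hib => by
      obtain ⟨d, rfl⟩ := Nat.exists_eq_add_of_le hi
      exact cantorBInf_le_cantorBSup_succ hs (by omega) hh (by positivity) (by omega)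
        (hmono d (d + 1) (by omega) (by omega)))
    (by
      rw [Nat.add_sub_assoc (by omega)]
      exact (cantorBInf_mul_add_pred_le_cantorB hs hsp.le hh hid hn).trans
        (cantorB_le_cantorBSup_mul hs (by omega) hh hn))
    ⟨s * n + d₁, ⟨by omega, by omega⟩, hI.trans hγ.1⟩
    ⟨s * n + d₂, ⟨by omega, by omega⟩, hγ.2.trans hS⟩
  exact ⟨m, by nlinarith [hm.1], hγm⟩

theorem exists_pos_mem_Icc_cantorBInf_cantorBSup (hs : 1 < s) (hsp : s < p)
    (hmono : ∀ i j, i < j → j < s → h i < h j) (hh : ∀ d < s, h d < p) {γ : ℝ}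
    (hγ : γ ∈ Icc (sInf (cantorB p s h '' Ici 1)) (sSup (cantorB p s h '' Ici 1))) :
    ∃ n > 0, γ ∈ Icc (cantorBInf p s h n) (cantorBSup p s h n) := by
  have hp : 1 < p := by omega
  have hne : (cantorB p s h '' Ici 1).Nonempty := ⟨_, mem_image_of_mem _ (mem_Ici.2 le_rfl)⟩
  have hdigits : (Finset.Ico 1 s).Nonempty := ⟨1, by simp; omega⟩
  obtain ⟨d₁, hd₁, hmin⟩ := (Finset.Ico 1 s).exists_min_image (cantorBInf p s h) hdigits
  obtain ⟨d₂, hd₂, hmax⟩ := (Finset.Ico 1 s).exists_max_image (cantorBSup p s h) hdigits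
  have hI : cantorBInf p s h d₁ ≤ sInf (cantorB p s h '' Ici 1) :=
    le_csInf hne <| forall_mem_image.2 fun n hn => by
      obtain ⟨d, hd, hds, hmem⟩ := exists_digit_mem_descendants hs hn
      exact (hmin d (by simp; omega)).trans (cantorBInf_le_cantorB hmem)
  have hS : sSup (cantorB p s h '' Ici 1) ≤ cantorBSup p s h d₂ :=
    csSup_le hne <| forall_mem_image.2 fun n hn => by
      obtain ⟨d, hd, hds, hmem⟩ := exists_digit_mem_descendants hs hn
      exact (cantorB_le_cantorBSup hs hp hh hd hmem).trans (hmax d (by simp; omega))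
  have hwrap : cantorBInf p s h (s - 1) ≤ cantorBSup p s h 1 := by
    have hlast := cantorBInf_mul_add_pred_le (p := p) (h := h) hs hp hh 0
    have hb1 : cantorB p s h 1 = h 1 := by simp [cantorB, cantorInt_of_lt hs one_pos hs]
    have h1 : (1 : ℝ) ≤ h 1 := by exact_mod_cast (Nat.zero_le _).trans_lt (hmono 0 1 one_pos hs)
    simp only [mul_zero, zero_add, cantorInt_zero, Nat.cast_zero, Real.one_rpow,
      div_one] at hlast
    exact hlast.trans (h1.trans (hb1 ▸ cantorB_le_cantorBSup hs hp hh one_pos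
      (self_mem_descendants s 1)))
  obtain ⟨n, hn, hγn⟩ := exists_mem_Icc_of_chain (a := 1) (b := s)
    (I := cantorBInf p s h) (S := cantorBSup p s h)
    (fun i hi hib => by
      simpa using cantorBInf_le_cantorBSup_succ (q := 0) hs hp hh (by omega) hib
        (hmono i (i + 1) (by omega) hib))
    hwrap ⟨d₁, by simpa using hd₁, hI.trans hγ.1⟩
    ⟨d₂, by simpa using hd₂, hγ.2.trans hS⟩
  exact ⟨n, hn.1, hγn⟩

end CantorSequence

theorem stmt5 (p s : ℕ) (h : ℕ → ℕ) (hs : 2 ≤ s) (hp : s < p)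
    (hmono : ∀ i j, i < j → j < s → h i < h j)
    (hrange : ∀ i, i < s → h i < p)
    (m M : ℝ) (hm : m = sInf {x : ℝ | ∃ n : ℕ, 1 ≤ n ∧ cantorB p s h n = x})
    (hM : M = sSup {x : ℝ | ∃ n : ℕ, 1 ≤ n ∧ cantorB p s h n = x}) :
    ∀ γ ∈ Set.Icc m M, MapClusterPt γ atTop (fun n : ℕ => cantorB p s h n) := by
  intro γ hγ
  subst hm hM
  have hfreq : ∃ᶠ n in atTop, 0 < n ∧ γ ∈ Icc (cantorBInf p s h n) (cantorBSup p s h n) :=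
    Nat.frequently_atTop_of_exists_of_forall_exists_gt
      (exists_pos_mem_Icc_cantorBInf_cantorBSup hs hp hmono hrange hγ)
      fun n ⟨hn, hγn⟩ =>
        (exists_gt_mem_Icc_cantorBInf_cantorBSup hs hp hmono hrange hn hγn).imp
          fun m ⟨hnm, hγm⟩ => ⟨hnm, by omega, hγm⟩
  refine mapClusterPt_of_frequently_dist_le
    (tendsto_mul_one_sub_div_add_one_rpow_add_one_div_rpow
      (zero_lt_one.trans_le (one_le_logb_natCast hs hp.le)) p)
    (hfreq.mono fun n ⟨hn, hγn⟩ => ?_)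
  have hbn : cantorB p s h n ∈ Icc (cantorBInf p s h n) (cantorBSup p s h n) :=
    ⟨cantorBInf_le_cantorB (self_mem_descendants s n),
      cantorB_le_cantorBSup hs (by omega) hrange hn (self_mem_descendants s n)⟩
  exact (Real.dist_le_of_mem_Icc hbn hγn).trans
    (cantorBSup_sub_cantorBInf_le hs (by omega) hrange hn)
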